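/- The matrix-valued map p ↦ E(p) is globally Lipschitz on ℝ²: there exists c > 0 such that for all p, q ∈ ℝ², the (operator or Frobenius) norm of E(p) − E(q) is at most c|p − q|, where E(p) = √(1+|p|²)(I − (p⊗p)/(1+|p|²)). -/
import Mathlib


open Matrix

/-- `Q p = √(1+|p|²)` for `p ∈ ℝ²`. -/
noncomputable def Q2 (p : Fin 2 → ℝ) : ℝ := Real.sqrt (1 + p ⬝ᵥ p)

/-- Euclidean norm of a vector in `ℝⁿ`. -/
noncomputable def enorm2 {n : ℕ} (v : Fin n → ℝ) : ℝ := Real.sqrt (v ⬝ᵥ v)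

/-- Frobenius norm of a 2×2 matrix. -/
noncomputable def frob (A : Matrix (Fin 2) (Fin 2) ℝ) : ℝ :=
  Real.sqrt (∑ i, ∑ j, (A i j) ^ 2)

/-- `E(p) = √(1+|p|²)(I − (p⊗p)/(1+|p|²))`. -/
noncomputable def Emat (p : Fin 2 → ℝ) : Matrix (Fin 2) (Fin 2) ℝ :=
  Q2 p • ((1 : Matrix (Fin 2) (Fin 2) ℝ) - (1 + p ⬝ᵥ p)⁻¹ • Matrix.vecMulVec p p)

lemma dot_self_eq (v : Fin 2 → ℝ) : v ⬝ᵥ v = ∑ i, v i ^ 2 := by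
  simp [dotProduct, sq]

lemma dot_self_nonneg (v : Fin 2 → ℝ) : 0 ≤ v ⬝ᵥ v := by
  rw [dot_self_eq]; positivity

lemma enorm2_nonneg (v : Fin 2 → ℝ) : 0 ≤ enorm2 v := Real.sqrt_nonneg _

lemma sq_enorm2 (v : Fin 2 → ℝ) : enorm2 v ^ 2 = v ⬝ᵥ v :=
  Real.sq_sqrt (dot_self_nonneg v)

lemma abs_coord_le (v : Fin 2 → ℝ) (i : Fin 2) : |v i| ≤ enorm2 v := by
  rw [enorm2, dot_self_eq]
  rw [show |v i| = Real.sqrt ((v i)^2) by rw [Real.sqrt_sq_eq_abs]]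
  apply Real.sqrt_le_sqrt
  fin_cases i <;> simp [Fin.sum_univ_two] <;> positivity

lemma CS (u v : Fin 2 → ℝ) : u ⬝ᵥ v ≤ enorm2 u * enorm2 v := by
  simpa [dotProduct, enorm2, sq, Fin.sum_univ_two] using
    Real.sum_mul_le_sqrt_mul_sqrt Finset.univ u v

lemma absCS (u v : Fin 2 → ℝ) : |u ⬝ᵥ v| ≤ enorm2 u * enorm2 v := by
  rw [abs_le]
  constructor
  · have h := CS u (-v)
    have he : enorm2 (-v) = enorm2 v := by simp [enorm2, dotProduct, mul_comm]
    rw [he, dotProduct_neg] at h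
    linarith
  · exact CS u v

lemma Q2_pos (p : Fin 2 → ℝ) : 0 < Q2 p := by
  apply Real.sqrt_pos.2; linarith [dot_self_nonneg p]

lemma Q2_sq (p : Fin 2 → ℝ) : Q2 p ^ 2 = 1 + p ⬝ᵥ p :=
  Real.sq_sqrt (by linarith [dot_self_nonneg p])

lemma abs_coord_le_Q2 (p : Fin 2 → ℝ) (i : Fin 2) : |p i| ≤ Q2 p := by
  refine (abs_coord_le p i).trans ?_
  rw [enorm2, Q2]
  exact Real.sqrt_le_sqrt (by linarith)

lemma enorm2_le_Q2 (p : Fin 2 → ℝ) : enorm2 p ≤ Q2 p := by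
  rw [enorm2, Q2]; exact Real.sqrt_le_sqrt (by linarith)

lemma Q2_diff (p q : Fin 2 → ℝ) : |Q2 p - Q2 q| ≤ enorm2 (p - q) := by
  have hsum : Q2 p + Q2 q > 0 := by linarith [Q2_pos p, Q2_pos q]
  have hd : p ⬝ᵥ p - q ⬝ᵥ q = (p - q) ⬝ᵥ p + (p - q) ⬝ᵥ q := by
    simp [dotProduct, Fin.sum_univ_two]; ring
  have h1 : |(p - q) ⬝ᵥ p| ≤ enorm2 (p - q) * Q2 p :=
    (absCS _ _).trans (by nlinarith [enorm2_le_Q2 p, enorm2_nonneg (p - q)])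
  have h2 : |(p - q) ⬝ᵥ q| ≤ enorm2 (p - q) * Q2 q :=
    (absCS _ _).trans (by nlinarith [enorm2_le_Q2 q, enorm2_nonneg (p - q)])
  have key : |Q2 p - Q2 q| * (Q2 p + Q2 q) ≤ enorm2 (p - q) * (Q2 p + Q2 q) := by
    have : (Q2 p - Q2 q) * (Q2 p + Q2 q) = p ⬝ᵥ p - q ⬝ᵥ q := by
      nlinarith [Q2_sq p, Q2_sq q]
    rw [show |Q2 p - Q2 q| * (Q2 p + Q2 q) = |(Q2 p - Q2 q) * (Q2 p + Q2 q)| by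
      rw [abs_mul, abs_of_pos hsum], this, hd]
    calc |(p - q) ⬝ᵥ p + (p - q) ⬝ᵥ q| ≤ |(p - q) ⬝ᵥ p| + |(p - q) ⬝ᵥ q| := abs_add_le _ _
    _ ≤ _ := by linarith [h1, h2]; 
  exact le_of_mul_le_mul_right (by linarith) hsum

lemma entry (p : Fin 2 → ℝ) (i j : Fin 2) :
    Emat p i j = (if i = j then Q2 p else 0) - p i * p j / Q2 p := by
  have hQ := Q2_pos p
  have hsq := Q2_sq p
  have h1 : (1 + p ⬝ᵥ p) = Q2 p ^ 2 := hsq.symm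
  simp only [Emat, Matrix.smul_apply, Matrix.sub_apply, Matrix.one_apply,
    Matrix.vecMulVec_apply, smul_eq_mul, h1]
  by_cases h : i = j <;> simp [h] <;> field_simp <;> ring

lemma ratio_le_one (p : Fin 2 → ℝ) (i : Fin 2) : |p i / Q2 p| ≤ 1 := by
  rw [abs_div, abs_of_pos (Q2_pos p)]
  exact div_le_one_of_le₀ (abs_coord_le_Q2 p i) (Q2_pos p).le

lemma entry_diff (p q : Fin 2 → ℝ) (i j : Fin 2) :
    |Emat p i j - Emat q i j| ≤ 4 * enorm2 (p - q) := by
  set d := enorm2 (p - q) with hd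
  have hd0 : 0 ≤ d := enorm2_nonneg _
  have hQp := Q2_pos p
  have hQq := Q2_pos q
  have hident : Emat p i j - Emat q i j = (if i = j then Q2 p - Q2 q else 0)
      - ((p i / Q2 p) * ((p - q) j) + (p i / Q2 p) * (q j / Q2 q) * (Q2 q - Q2 p)
        + ((p - q) i) * (q j / Q2 q)) := by
    rw [entry p, entry q]
    by_cases h : i = j <;> simp only [h, if_true, if_false, Pi.sub_apply] <;>
      field_simp <;> ring
  have hQd : |Q2 p - Q2 q| ≤ d := Q2_diff p q
  have h1 : |(p i / Q2 p) * ((p - q) j)| ≤ d := by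
    rw [abs_mul]
    calc |p i / Q2 p| * |(p - q) j| ≤ 1 * d :=
      mul_le_mul (ratio_le_one p i) (abs_coord_le _ j) (abs_nonneg _) zero_le_one
    _ = d := one_mul d
  have h2 : |(p i / Q2 p) * (q j / Q2 q) * (Q2 q - Q2 p)| ≤ d := by
    rw [abs_mul, abs_mul]
    have hqq := ratio_le_one q j
    have hpp := ratio_le_one p i
    have : |Q2 q - Q2 p| ≤ d := by rw [abs_sub_comm]; exact hQd
    have hab : |p i / Q2 p| * |q j / Q2 q| ≤ 1 := by
      nlinarith [abs_nonneg (p i / Q2 p), abs_nonneg (q j / Q2 q)]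
    calc |p i / Q2 p| * |q j / Q2 q| * |Q2 q - Q2 p| ≤ 1 * d :=
      mul_le_mul hab this (abs_nonneg _) zero_le_one
    _ = d := one_mul d
  have h3 : |((p - q) i) * (q j / Q2 q)| ≤ d := by
    rw [abs_mul]
    calc |(p - q) i| * |q j / Q2 q| ≤ d * 1 :=
      mul_le_mul (abs_coord_le _ i) (ratio_le_one q j) (abs_nonneg _) hd0
    _ = d := mul_one d
  have hif : |(if i = j then Q2 p - Q2 q else 0)| ≤ d := by
    by_cases h : i = j <;> simp [h, hQd, hd0]
  rw [hident]
  calc |(if i = j then Q2 p - Q2 q else 0) - ((p i / Q2 p) * ((p - q) j)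
        + (p i / Q2 p) * (q j / Q2 q) * (Q2 q - Q2 p) + ((p - q) i) * (q j / Q2 q))|
      ≤ |(if i = j then Q2 p - Q2 q else 0)| + |((p i / Q2 p) * ((p - q) j)
        + (p i / Q2 p) * (q j / Q2 q) * (Q2 q - Q2 p) + ((p - q) i) * (q j / Q2 q))| :=
        abs_sub _ _
    _ ≤ d + (|(p i / Q2 p) * ((p - q) j)| + |(p i / Q2 p) * (q j / Q2 q) * (Q2 q - Q2 p)|
        + |((p - q) i) * (q j / Q2 q)|) := by
        gcongr
        exact (abs_add_three _ _ _)
    _ ≤ 4 * d := by linarith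

/-- The map `p ↦ E(p)` is globally Lipschitz on `ℝ²`. -/
theorem Emat_lipschitz :
    ∃ c > 0, ∀ p q : Fin 2 → ℝ, frob (Emat p - Emat q) ≤ c * enorm2 (p - q) := by
  refine ⟨8, by norm_num, fun p q => ?_⟩
  set d := enorm2 (p - q) with hd
  have hd0 : 0 ≤ d := enorm2_nonneg _
  have key : ∀ i j : Fin 2, ((Emat p - Emat q) i j) ^ 2 ≤ 16 * d ^ 2 := by
    intro i j
    have h := entry_diff p q i j
    have h2 : (Emat p - Emat q) i j = Emat p i j - Emat q i j := by
      simp [Matrix.sub_apply]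
    rw [h2]
    nlinarith [sq_abs (Emat p i j - Emat q i j), abs_nonneg (Emat p i j - Emat q i j)]
  have hsum : (∑ i, ∑ j, ((Emat p - Emat q) i j) ^ 2) ≤ 64 * d ^ 2 := by
    have := key 0 0; have := key 0 1; have := key 1 0; have := key 1 1
    simp only [Fin.sum_univ_two]
    linarith
  calc frob (Emat p - Emat q) ≤ Real.sqrt (64 * d ^ 2) := Real.sqrt_le_sqrt hsum
    _ = 8 * d := by
        rw [show (64:ℝ) * d ^ 2 = (8 * d) ^ 2 by ring, Real.sqrt_sq (by positivity)]
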